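/- arXiv:2003.04314 — 2 statements merged into one kernel-verified Lean document; each statement's English description precedes it below -/
import Mathlib

section
/- For all natural numbers k ≤ l, the covariance and second-order product moment of the generation sizes satisfy Cov(Z_k, Z_l) = μ^l · Σ_{j=0}^{k−1} μ^j and E[Z_k Z_l] = μ^l · Σ_{j=0}^{k} μ^j; in particular, when μ ≠ 1, Cov(Z_k, Z_l) = μ^l (1 − μ^k)/(1 − μ) and E[Z_k Z_l] = μ^l (1 − μ^{k+1})/(1 − μ). -/
/-!
Given the first `l` generations, `Z (l + 1)` is a sum of `Z l` offspring numbers of generation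
`l`, which are independent of the past and of each other. Averaging over the value of `Z l`
therefore gives `E[W Z_{l+1}] = μ E[W Z_l]` for every `W` determined by the first `l` generations,
and, since a Poisson(μ) variable has mean `μ` and second moment `μ² + μ`,
`E[Z_{l+1}²] = μ² E[Z_l²] + μ E[Z_l]`. Iterating yields `E[Z_n] = μ^n`,
`E[Z_k Z_{k+d}] = μ^d E[Z_k²]` and `E[Z_k²] = μ^k ∑_{j ≤ k} μ^j`.
All moments are computed as lower Lebesgue integrals in `ℝ≥0∞`, where no integrability has to be
checked, and turned into Bochner integrals at the end.
-/

open MeasureTheory ProbabilityTheory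
open scoped ENNReal Nat

section GaltonWatsonMoments

lemma hasSum_descFactorial_mul_poisson (μ : ℝ) (j : ℕ) :
    HasSum (fun n : ℕ => (n.descFactorial j : ℝ) * (Real.exp (-μ) * μ ^ n / n !)) (μ ^ j) := by
  rw [← hasSum_nat_add_iff' j]
  have hlow : ∑ n ∈ Finset.range j, (n.descFactorial j : ℝ) * (Real.exp (-μ) * μ ^ n / n !) = 0 :=
    Finset.sum_eq_zero fun n hn => by
      rw [Nat.descFactorial_eq_zero_iff_lt.mpr (Finset.mem_range.mp hn), Nat.cast_zero, zero_mul]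
  have hexp := ((NormedSpace.expSeries_div_hasSum_exp μ).mul_left (Real.exp (-μ))).mul_left (μ ^ j)
  rw [← Real.exp_eq_exp_ℝ, ← Real.exp_add, neg_add_cancel, Real.exp_zero, mul_one] at hexp
  suffices h : ∀ n, ((n + j).descFactorial j : ℝ) * (Real.exp (-μ) * μ ^ (n + j) / (n + j)!)
      = μ ^ j * (Real.exp (-μ) * (μ ^ n / n !)) by
    simpa only [hlow, sub_zero, h] using hexp
  intro n
  have hfac : ((n + j) ! : ℝ) = n ! * (n + j).descFactorial j := by
    rw [← Nat.cast_mul, ← Nat.factorial_mul_descFactorial (Nat.le_add_left j n), Nat.add_sub_cancel]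
  have hpos : ((n + j).descFactorial j : ℝ) ≠ 0 := by
    exact_mod_cast Nat.descFactorial_eq_zero_iff_lt.not.mpr (by omega)
  rw [hfac]
  field_simp
  ring

lemma Measurable.randomIndex {α β : Type*} {mα : MeasurableSpace α} [MeasurableSpace β]
    {N : α → ℕ} (hN : Measurable N) {f : ℕ → α → β} (hf : ∀ n, Measurable (f n)) :
    Measurable fun a => f (N a) a :=
  (measurable_from_prod_countable_right (f := fun p : ℕ × α => f p.1 p.2) hf).comp
    (hN.prodMk measurable_id)

variable {Ω : Type*}

abbrev offspringSigma (ξ : ℕ → ℕ → Ω → ℕ) (S : Set ℕ) : MeasurableSpace Ω :=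
  ⨆ p ∈ Prod.fst ⁻¹' S, MeasurableSpace.comap (ξ p.1 p.2) inferInstance

structure IsGaltonWatson (ξ : ℕ → ℕ → Ω → ℕ) (Z : ℕ → Ω → ℕ) : Prop where
  zero : ∀ ω, Z 0 ω = 1
  succ : ∀ k ω, Z (k + 1) ω = ∑ i ∈ Finset.Icc 1 (Z k ω), ξ k i ω

section OffspringSigma

variable {ξ : ℕ → ℕ → Ω → ℕ}

lemma offspringSigma_mono {S T : Set ℕ} (hST : S ⊆ T) :
    offspringSigma ξ S ≤ offspringSigma ξ T :=
  biSup_mono fun _ hp => hST hp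

lemma measurable_offspringSigma {S : Set ℕ} {k : ℕ} (hk : k ∈ S) (i : ℕ) :
    Measurable[offspringSigma ξ S] (ξ k i) :=
  Measurable.of_comap_le
    (le_biSup (fun p : ℕ × ℕ => MeasurableSpace.comap (ξ p.1 p.2) inferInstance)
      (show (k, i) ∈ Prod.fst ⁻¹' S from hk))

lemma IsGaltonWatson.measurable_generation_offspringSigma_Iio {Z : ℕ → Ω → ℕ}
    (hZ : IsGaltonWatson ξ Z) (n : ℕ) : Measurable[offspringSigma ξ (Set.Iio n)] (Z n) := by
  induction n with
  | zero => rw [funext hZ.zero]; exact measurable_const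
  | succ n ih =>
    have hZn : Measurable[offspringSigma ξ (Set.Iio (n + 1))] (Z n) :=
      ih.mono (offspringSigma_mono (Set.Iio_subset_Iio n.le_succ)) le_rfl
    have hrow (c : ℕ) : Measurable[offspringSigma ξ (Set.Iio (n + 1))]
        fun ω => ∑ i ∈ Finset.Icc 1 c, ξ n i ω :=
      Finset.measurable_sum _ fun i _ => measurable_offspringSigma (Set.mem_Iio.2 n.lt_succ_self) i
    rw [funext (hZ.succ n)]
    exact hZn.randomIndex (f := fun c ω => ∑ i ∈ Finset.Icc 1 c, ξ n i ω) hrow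

end OffspringSigma

variable [mΩ : MeasurableSpace Ω] {P : Measure Ω}

lemma lintegral_comp_eq_tsum_of_measurable_nat {X : Ω → ℕ} (hX : Measurable X) (F : ℕ → ℝ≥0∞) :
    ∫⁻ ω, F (X ω) ∂P = ∑' n, F n * P {ω | X ω = n} := by
  rw [← lintegral_map (f := F) measurable_from_top hX, lintegral_countable']
  simp_rw [Measure.map_apply hX (measurableSet_singleton _)]
  rfl

section Poisson

variable {μ : ℝ} {X : Ω → ℕ}

lemma lintegral_descFactorial_of_poisson (hμ : 0 ≤ μ) (hX : Measurable X)
    (hlaw : ∀ n, P {ω | X ω = n} = ENNReal.ofReal (Real.exp (-μ) * μ ^ n / n !)) (j : ℕ) :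
    ∫⁻ ω, ((X ω).descFactorial j : ℝ≥0∞) ∂P = ENNReal.ofReal μ ^ j := by
  have hsum := hasSum_descFactorial_mul_poisson μ j
  have hterm (n : ℕ) : (n.descFactorial j : ℝ≥0∞) * P {ω | X ω = n}
      = ENNReal.ofReal ((n.descFactorial j : ℝ) * (Real.exp (-μ) * μ ^ n / n !)) := by
    rw [hlaw, ENNReal.ofReal_mul (by positivity), ENNReal.ofReal_natCast]
  rw [lintegral_comp_eq_tsum_of_measurable_nat hX (fun n => (n.descFactorial j : ℝ≥0∞)),
    tsum_congr hterm, ← ENNReal.ofReal_tsum_of_nonneg (fun n => by positivity) hsum.summable,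
    hsum.tsum_eq, ENNReal.ofReal_pow hμ]

lemma lintegral_of_poisson (hμ : 0 ≤ μ) (hX : Measurable X)
    (hlaw : ∀ n, P {ω | X ω = n} = ENNReal.ofReal (Real.exp (-μ) * μ ^ n / n !)) :
    ∫⁻ ω, (X ω : ℝ≥0∞) ∂P = ENNReal.ofReal μ := by
  simpa using lintegral_descFactorial_of_poisson hμ hX hlaw 1

lemma lintegral_sq_of_poisson (hμ : 0 ≤ μ) (hX : Measurable X)
    (hlaw : ∀ n, P {ω | X ω = n} = ENNReal.ofReal (Real.exp (-μ) * μ ^ n / n !)) :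
    ∫⁻ ω, (X ω : ℝ≥0∞) ^ 2 ∂P = ENNReal.ofReal μ ^ 2 + ENNReal.ofReal μ := by
  have hsplit (n : ℕ) : n ^ 2 = n.descFactorial 2 + n := by
    cases n with
    | zero => rfl
    | succ n => rw [Nat.succ_descFactorial_succ, Nat.descFactorial_one]; ring
  simp_rw [← Nat.cast_pow, hsplit, Nat.cast_add]
  rw [lintegral_add_right _ (by fun_prop : Measurable fun ω => (X ω : ℝ≥0∞)),
    lintegral_descFactorial_of_poisson hμ hX hlaw, lintegral_of_poisson hμ hX hlaw]

end Poisson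

lemma lintegral_mul_randomIndex_of_indep {m₁ m₂ : MeasurableSpace Ω} (hm₁ : m₁ ≤ mΩ)
    (hm₂ : m₂ ≤ mΩ) (hind : Indep m₁ m₂ P) {W : Ω → ℝ≥0∞} {N : Ω → ℕ} (hW : Measurable[m₁] W)
    (hN : Measurable[m₁] N) {f : ℕ → Ω → ℝ≥0∞} (hf : ∀ n, Measurable[m₂] (f n)) :
    ∫⁻ ω, W ω * f (N ω) ω ∂P = ∫⁻ ω, W ω * ∫⁻ ω', f (N ω) ω' ∂P ∂P := by
  set W' : ℕ → Ω → ℝ≥0∞ := fun n => {ω | N ω = n}.indicator W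
  have hW' (n : ℕ) : Measurable[m₁] (W' n) := hW.indicator (hN (measurableSet_singleton n))
  have hsplit (g : ℕ → Ω → ℝ≥0∞) (ω : Ω) : W ω * g (N ω) ω = ∑' n, W' n ω * g n ω := by
    rw [tsum_eq_single (N ω) fun n hn => by simp [W', Ne.symm hn]]
    simp [W']
  calc ∫⁻ ω, W ω * f (N ω) ω ∂P
      = ∑' n, ∫⁻ ω, W' n ω * f n ω ∂P := by
        simp_rw [hsplit f]
        exact lintegral_tsum fun n =>
          (((hW' n).mono hm₁ le_rfl).mul ((hf n).mono hm₂ le_rfl)).aemeasurable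
    _ = ∑' n, ∫⁻ ω, W' n ω * ∫⁻ ω', f n ω' ∂P ∂P := by
        congr 1 with n
        rw [lintegral_mul_eq_lintegral_mul_lintegral_of_independent_measurableSpace hm₁ hm₂ hind
          (hW' n) (hf n), lintegral_mul_const _ ((hW' n).mono hm₁ le_rfl)]
    _ = ∫⁻ ω, W ω * ∫⁻ ω', f (N ω) ω' ∂P ∂P := by
        simp_rw [hsplit fun n _ => ∫⁻ ω', f n ω' ∂P]
        exact (lintegral_tsum fun n => ((hW' n).mono hm₁ le_rfl).mul_const _ |>.aemeasurable).symm

lemma lintegral_sum_sq_of_pairwise_indepFun {ι : Type*} (s : Finset ι) {X : ι → Ω → ℝ≥0∞}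
    (hX : ∀ i, Measurable (X i)) (hindep : Pairwise fun i j => IndepFun (X i) (X j) P)
    {m v : ℝ≥0∞} (hmean : ∀ i, ∫⁻ ω, X i ω ∂P = m) (hsq : ∀ i, ∫⁻ ω, X i ω ^ 2 ∂P = m ^ 2 + v) :
    ∫⁻ ω, (∑ i ∈ s, X i ω) ^ 2 ∂P = (s.card : ℝ≥0∞) ^ 2 * m ^ 2 + s.card * v := by
  classical
  have hpair (i j : ι) : ∫⁻ ω, X i ω * X j ω ∂P = m ^ 2 + if i = j then v else 0 := by
    rcases eq_or_ne i j with rfl | hij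
    · simp_rw [← sq, hsq, if_pos]
    · rw [lintegral_mul_eq_lintegral_mul_lintegral_of_indepFun'' (hX i).aemeasurable
        (hX j).aemeasurable (hindep hij), hmean, hmean, if_neg hij, add_zero, sq]
  have hmeas (i j : ι) : Measurable fun ω => X i ω * X j ω := (hX i).mul (hX j)
  simp_rw [sq, Finset.sum_mul_sum]
  rw [lintegral_finsetSum _ fun i _ => Finset.measurable_sum _ fun j _ => hmeas i j]
  simp_rw [lintegral_finsetSum _ fun j _ => hmeas _ j, hpair, Finset.sum_add_distrib,
    Finset.sum_ite_eq, Finset.sum_ite_mem, Finset.inter_self, Finset.sum_const, nsmul_eq_mul]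
  ring

lemma integral_natCast_eq_toReal_lintegral {X : Ω → ℕ} (hX : Measurable X) :
    ∫ ω, (X ω : ℝ) ∂P = (∫⁻ ω, (X ω : ℝ≥0∞) ∂P).toReal := by
  rw [integral_eq_lintegral_of_nonneg_ae (ae_of_all _ fun ω => Nat.cast_nonneg _) (by fun_prop)]
  simp_rw [ENNReal.ofReal_natCast]

section OffspringIndependence

variable {ξ : ℕ → ℕ → Ω → ℕ}

lemma offspringSigma_le (hmeas : ∀ k i, Measurable (ξ k i)) (S : Set ℕ) :
    offspringSigma ξ S ≤ mΩ :=
  iSup₂_le fun p _ => (hmeas p.1 p.2).comap_le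

lemma indep_offspringSigma (hmeas : ∀ k i, Measurable (ξ k i))
    (hindep : iIndepFun (fun p : ℕ × ℕ => ξ p.1 p.2) P) {S T : Set ℕ} (hST : Disjoint S T) :
    Indep (offspringSigma ξ S) (offspringSigma ξ T) P :=
  indep_iSup_of_disjoint (m := fun p : ℕ × ℕ => MeasurableSpace.comap (ξ p.1 p.2) inferInstance)
    (fun p => (hmeas p.1 p.2).comap_le) hindep.iIndep (hST.preimage Prod.fst)

end OffspringIndependence

namespace IsGaltonWatson

variable {ξ : ℕ → ℕ → Ω → ℕ} {Z : ℕ → Ω → ℕ}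

lemma measurable_generation (hZ : IsGaltonWatson ξ Z) (hmeas : ∀ k i, Measurable (ξ k i))
    (n : ℕ) : Measurable (Z n) :=
  (hZ.measurable_generation_offspringSigma_Iio n).mono (offspringSigma_le hmeas _) le_rfl

lemma lintegral_mul_comp_generation_succ (hZ : IsGaltonWatson ξ Z)
    (hmeas : ∀ k i, Measurable (ξ k i)) (hindep : iIndepFun (fun p : ℕ × ℕ => ξ p.1 p.2) P)
    {l : ℕ} {W : Ω → ℝ≥0∞} (hW : Measurable[offspringSigma ξ (Set.Iio l)] W)
    {F : ℝ≥0∞ → ℝ≥0∞} (hF : Measurable F) :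
    ∫⁻ ω, W ω * F (Z (l + 1) ω) ∂P
      = ∫⁻ ω, W ω * ∫⁻ ω', F (∑ i ∈ Finset.Icc 1 (Z l ω), ξ l i ω') ∂P ∂P := by
  simp_rw [hZ.succ, Nat.cast_sum]
  exact lintegral_mul_randomIndex_of_indep (offspringSigma_le hmeas _) (offspringSigma_le hmeas _)
    (indep_offspringSigma hmeas hindep (T := {l}) (by simp)) hW
    (hZ.measurable_generation_offspringSigma_Iio l)
    (f := fun c ω => F (∑ i ∈ Finset.Icc 1 c, (ξ l i ω : ℝ≥0∞)))
    fun c => hF.comp (Finset.measurable_sum _ fun i _ =>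
      measurable_from_top.comp (measurable_offspringSigma (Set.mem_singleton l) i))

lemma lintegral_mul_generation_succ (hZ : IsGaltonWatson ξ Z) (hmeas : ∀ k i, Measurable (ξ k i))
    (hindep : iIndepFun (fun p : ℕ × ℕ => ξ p.1 p.2) P) {m : ℝ≥0∞}
    (hmean : ∀ k i, ∫⁻ ω, (ξ k i ω : ℝ≥0∞) ∂P = m) {l : ℕ} {W : Ω → ℝ≥0∞}
    (hW : Measurable[offspringSigma ξ (Set.Iio l)] W) :
    ∫⁻ ω, W ω * Z (l + 1) ω ∂P = m * ∫⁻ ω, W ω * Z l ω ∂P := by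
  have hrow (c : ℕ) : ∫⁻ ω, ∑ i ∈ Finset.Icc 1 c, (ξ l i ω : ℝ≥0∞) ∂P = c * m := by
    rw [lintegral_finsetSum _ fun i _ => (by fun_prop : Measurable fun ω => (ξ l i ω : ℝ≥0∞))]
    simp [hmean]
  have hWZ : Measurable fun ω => W ω * Z l ω :=
    (hW.mono (offspringSigma_le hmeas _) le_rfl).mul
      (measurable_from_top.comp (hZ.measurable_generation hmeas l))
  rw [hZ.lintegral_mul_comp_generation_succ hmeas hindep hW (F := fun x => x) measurable_id]
  simp_rw [hrow, ← mul_assoc]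
  rw [lintegral_mul_const _ hWZ, mul_comm]

lemma lintegral_generation_succ_sq (hZ : IsGaltonWatson ξ Z) (hmeas : ∀ k i, Measurable (ξ k i))
    (hindep : iIndepFun (fun p : ℕ × ℕ => ξ p.1 p.2) P) {m v : ℝ≥0∞}
    (hmean : ∀ k i, ∫⁻ ω, (ξ k i ω : ℝ≥0∞) ∂P = m)
    (hsq : ∀ k i, ∫⁻ ω, (ξ k i ω : ℝ≥0∞) ^ 2 ∂P = m ^ 2 + v) (l : ℕ) :
    ∫⁻ ω, (Z (l + 1) ω : ℝ≥0∞) ^ 2 ∂P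
      = m ^ 2 * ∫⁻ ω, (Z l ω : ℝ≥0∞) ^ 2 ∂P + v * ∫⁻ ω, (Z l ω : ℝ≥0∞) ∂P := by
  have hrow (c : ℕ) : ∫⁻ ω, (∑ i ∈ Finset.Icc 1 c, (ξ l i ω : ℝ≥0∞)) ^ 2 ∂P
      = c ^ 2 * m ^ 2 + c * v := by
    simpa using lintegral_sum_sq_of_pairwise_indepFun (Finset.Icc 1 c)
      (X := fun i ω => (ξ l i ω : ℝ≥0∞)) (fun i => by fun_prop)
      (fun i j hij => (hindep.indepFun (i := (l, i)) (j := (l, j)) (by simpa using hij)).comp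
        measurable_from_top measurable_from_top)
      (hmean l) (hsq l)
  have hZl := hZ.measurable_generation hmeas l
  have h := hZ.lintegral_mul_comp_generation_succ hmeas hindep (P := P) (l := l)
    (measurable_const (a := 1)) (F := fun x => x ^ 2) (by fun_prop)
  simp only [one_mul, hrow] at h
  rw [h, lintegral_add_left (by fun_prop), lintegral_mul_const _ (by fun_prop),
    lintegral_mul_const _ (by fun_prop), mul_comm, mul_comm v]

lemma lintegral_generation [IsProbabilityMeasure P] (hZ : IsGaltonWatson ξ Z)
    (hmeas : ∀ k i, Measurable (ξ k i)) (hindep : iIndepFun (fun p : ℕ × ℕ => ξ p.1 p.2) P)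
    {m : ℝ≥0∞} (hmean : ∀ k i, ∫⁻ ω, (ξ k i ω : ℝ≥0∞) ∂P = m) (n : ℕ) :
    ∫⁻ ω, (Z n ω : ℝ≥0∞) ∂P = m ^ n := by
  induction n with
  | zero => simp [hZ.zero]
  | succ n ih =>
    have h := hZ.lintegral_mul_generation_succ hmeas hindep hmean (l := n)
      (measurable_const (a := 1))
    simp only [one_mul] at h
    rw [h, ih, pow_succ, mul_comm]

lemma lintegral_generation_mul_generation_add (hZ : IsGaltonWatson ξ Z)
    (hmeas : ∀ k i, Measurable (ξ k i)) (hindep : iIndepFun (fun p : ℕ × ℕ => ξ p.1 p.2) P)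
    {m : ℝ≥0∞} (hmean : ∀ k i, ∫⁻ ω, (ξ k i ω : ℝ≥0∞) ∂P = m) (k d : ℕ) :
    ∫⁻ ω, (Z k ω : ℝ≥0∞) * Z (k + d) ω ∂P = m ^ d * ∫⁻ ω, (Z k ω : ℝ≥0∞) ^ 2 ∂P := by
  induction d with
  | zero => simp [sq]
  | succ d ih =>
    have hZk := (hZ.measurable_generation_offspringSigma_Iio k).mono
      (offspringSigma_mono (Set.Iio_subset_Iio (k.le_add_right d))) le_rfl
    rw [← add_assoc, hZ.lintegral_mul_generation_succ hmeas hindep hmean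
      (W := fun ω => Z k ω) (measurable_from_top.comp hZk), ih, pow_succ, mul_comm _ m, mul_assoc]

lemma lintegral_generation_sq_of_variance_eq_mean [IsProbabilityMeasure P]
    (hZ : IsGaltonWatson ξ Z) (hmeas : ∀ k i, Measurable (ξ k i))
    (hindep : iIndepFun (fun p : ℕ × ℕ => ξ p.1 p.2) P) {m : ℝ≥0∞}
    (hmean : ∀ k i, ∫⁻ ω, (ξ k i ω : ℝ≥0∞) ∂P = m)
    (hsq : ∀ k i, ∫⁻ ω, (ξ k i ω : ℝ≥0∞) ^ 2 ∂P = m ^ 2 + m) (n : ℕ) :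
    ∫⁻ ω, (Z n ω : ℝ≥0∞) ^ 2 ∂P = m ^ n * ∑ j ∈ Finset.range (n + 1), m ^ j := by
  induction n with
  | zero => simp [hZ.zero]
  | succ n ih =>
    rw [hZ.lintegral_generation_succ_sq hmeas hindep hmean hsq, ih,
      hZ.lintegral_generation hmeas hindep hmean, Finset.sum_range_succ' _ (n + 1)]
    simp_rw [pow_succ _ (_ : ℕ), ← Finset.sum_mul]
    ring

lemma integral_generation_of_poisson [IsProbabilityMeasure P] (hZ : IsGaltonWatson ξ Z)
    (hmeas : ∀ k i, Measurable (ξ k i)) (hindep : iIndepFun (fun p : ℕ × ℕ => ξ p.1 p.2) P)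
    {μ : ℝ} (hμ : 0 < μ)
    (hpois : ∀ k i n, P {ω | ξ k i ω = n} = ENNReal.ofReal (Real.exp (-μ) * μ ^ n / n !))
    (n : ℕ) : ∫ ω, (Z n ω : ℝ) ∂P = μ ^ n := by
  have hmean k i := lintegral_of_poisson hμ.le (hmeas k i) (hpois k i)
  rw [integral_natCast_eq_toReal_lintegral (hZ.measurable_generation hmeas n),
    hZ.lintegral_generation hmeas hindep hmean, ENNReal.toReal_pow, ENNReal.toReal_ofReal hμ.le]

lemma integral_generation_mul_generation_add_of_poisson [IsProbabilityMeasure P]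
    (hZ : IsGaltonWatson ξ Z) (hmeas : ∀ k i, Measurable (ξ k i))
    (hindep : iIndepFun (fun p : ℕ × ℕ => ξ p.1 p.2) P) {μ : ℝ} (hμ : 0 < μ)
    (hpois : ∀ k i n, P {ω | ξ k i ω = n} = ENNReal.ofReal (Real.exp (-μ) * μ ^ n / n !))
    (k d : ℕ) :
    ∫ ω, (Z k ω : ℝ) * Z (k + d) ω ∂P = μ ^ (k + d) * ∑ j ∈ Finset.range (k + 1), μ ^ j := by
  have hmean k i := lintegral_of_poisson hμ.le (hmeas k i) (hpois k i)
  have hsq k i := lintegral_sq_of_poisson hμ.le (hmeas k i) (hpois k i)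
  have hZm := hZ.measurable_generation hmeas
  have h := integral_natCast_eq_toReal_lintegral (P := P)
    (X := fun ω => Z k ω * Z (k + d) ω) (by fun_prop)
  push_cast at h
  rw [h, hZ.lintegral_generation_mul_generation_add hmeas hindep hmean,
    hZ.lintegral_generation_sq_of_variance_eq_mean hmeas hindep hmean hsq]
  simp only [ENNReal.toReal_mul, ENNReal.toReal_pow, ENNReal.toReal_ofReal hμ.le,
    ENNReal.toReal_sum fun j _ => ENNReal.pow_ne_top ENNReal.ofReal_ne_top]
  ring

end IsGaltonWatson

end GaltonWatsonMoments

/-- For `k ≤ l`, covariance and second-order product moment of the generation sizes of a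
Galton–Watson process with Poisson(μ) offspring:
`Cov(Z_k, Z_l) = μ^l Σ_{j<k} μ^j` and `E[Z_k Z_l] = μ^l Σ_{j≤k} μ^j`; in particular,
when `μ ≠ 1`, `Cov(Z_k, Z_l) = μ^l (1-μ^k)/(1-μ)` and
`E[Z_k Z_l] = μ^l (1-μ^{k+1})/(1-μ)`. -/
theorem gw_covariance_productMoment {Ω : Type*} [MeasurableSpace Ω]
    (P : Measure Ω) [IsProbabilityMeasure P]
    (μ : ℝ) (hμ : 0 < μ)
    (ξ : ℕ → ℕ → Ω → ℕ)
    (hmeas : ∀ k i, Measurable (ξ k i))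
    (hindep : iIndepFun
      (fun p : ℕ × ℕ => ξ p.1 p.2) P)
    (hpois : ∀ k i n, P {ω | ξ k i ω = n}
      = ENNReal.ofReal (Real.exp (-μ) * μ ^ n / n.factorial))
    (Z : ℕ → Ω → ℕ)
    (hZ0 : ∀ ω, Z 0 ω = 1)
    (hZrec : ∀ k ω, Z (k + 1) ω = ∑ i ∈ Finset.Icc 1 (Z k ω), ξ k i ω)
    (k l : ℕ) (hkl : k ≤ l) :
    (∫ ω, (Z k ω : ℝ) * (Z l ω : ℝ) ∂P)
        - (∫ ω, (Z k ω : ℝ) ∂P) * (∫ ω, (Z l ω : ℝ) ∂P)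
      = μ ^ l * ∑ j ∈ Finset.range k, μ ^ j ∧
    ∫ ω, (Z k ω : ℝ) * (Z l ω : ℝ) ∂P = μ ^ l * ∑ j ∈ Finset.range (k + 1), μ ^ j ∧
    (μ ≠ 1 →
      (∫ ω, (Z k ω : ℝ) * (Z l ω : ℝ) ∂P)
          - (∫ ω, (Z k ω : ℝ) ∂P) * (∫ ω, (Z l ω : ℝ) ∂P)
        = μ ^ l * (1 - μ ^ k) / (1 - μ) ∧
      ∫ ω, (Z k ω : ℝ) * (Z l ω : ℝ) ∂P = μ ^ l * (1 - μ ^ (k + 1)) / (1 - μ)) := by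
  have hZ : IsGaltonWatson ξ Z := ⟨hZ0, hZrec⟩
  have hE := hZ.integral_generation_of_poisson hmeas hindep hμ hpois
  obtain ⟨d, rfl⟩ := Nat.exists_eq_add_of_le hkl
  have hEE := hZ.integral_generation_mul_generation_add_of_poisson hmeas hindep hμ hpois k d
  have hcov : ∫ ω, (Z k ω : ℝ) * Z (k + d) ω ∂P - (∫ ω, (Z k ω : ℝ) ∂P) * ∫ ω, (Z (k + d) ω : ℝ) ∂P
      = μ ^ (k + d) * ∑ j ∈ Finset.range k, μ ^ j := by
    rw [hEE, hE, hE, Finset.sum_range_succ]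
    ring
  have hgeom (n : ℕ) (hμ1 : μ ≠ 1) : ∑ j ∈ Finset.range n, μ ^ j = (1 - μ ^ n) / (1 - μ) := by
    rw [geom_sum_eq hμ1, ← neg_div_neg_eq, neg_sub, neg_sub]
  refine ⟨hcov, hEE, fun hμ1 => ⟨?_, ?_⟩⟩
  · rw [hcov, hgeom k hμ1, mul_div_assoc]
  · rw [hEE, hgeom (k + 1) hμ1, mul_div_assoc]
end

section
/- Let Z and Z′ be ℕ-valued random variables with E[Z Z′] < ∞ satisfying the positive quadrant dependence condition ℙ(Z ≥ i, Z′ ≥ j) ≥ ℙ(Z ≥ i)ℙ(Z′ ≥ j) for all i, j ≥ 1. Let (T_i)_{i ≥ 1} and (S_j)_{j ≥ 1} be real-valued random variables such that the σ-algebra generated by the whole family (T_i, S_j)_{i,j ≥ 1} is independent of the σ-algebra generated by (Z, Z′). Let A and B be Borel subsets of ℝ and p ≥ 0 a real number with ℙ(S_j ∈ B) ≤ p for every j ≥ 1. Then |Cov(Σ_{i=1}^{Z} 1_{{T_i ∈ A}}, Σ_{j=1}^{Z′} 1_{{S_j ∈ B}})| ≤ p · (E[Z Z′] + Cov(Z,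 Z′)). -/
/-! Write `X`, `Y` for the two counts. Both `E[XY]` and `E[X] E[Y]` lie in `[0, p E[ZZ']]`,
so `|Cov(X, Y)| ≤ p E[ZZ']`, and positive quadrant dependence gives `Cov(Z, Z') ≥ 0`.
As the points are independent of `(Z, Z')`,
`E[XY] = ∑_{i,j ≥ 1} ℙ(T_i ∈ A, S_j ∈ B) ℙ(Z ≥ i, Z' ≥ j) ≤ p E[ZZ']`, and likewise
`E[Y] ≤ p E[Z']`; with `E[X] ≤ E[Z]` and `E[Z] E[Z'] ≤ E[ZZ']` (quadrant dependence summed over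
`i, j`) this bounds `E[X] E[Y]`.
`E[Z]` may be infinite, so everything is computed with `ℝ≥0∞`-valued integrals: the Bochner
integral's junk value `0` for a non-integrable function is exactly `∞.toReal`. -/

open MeasureTheory ProbabilityTheory Finset
open scoped ENNReal

lemma indicator_one_apply_le_one {Ω : Type*} (E : Set Ω) (ω : Ω) :
    E.indicator (1 : Ω → ℝ≥0∞) ω ≤ 1 :=
  Set.indicator_le_self' (fun _ _ => zero_le) ω

lemma Measurable.measurableSet_setOf_of_discrete {Ω α : Type*} [MeasurableSpace Ω]
    [MeasurableSpace α] [DiscreteMeasurableSpace α] {G : Ω → α} (hG : Measurable G)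
    (P : α → Prop) : MeasurableSet {ω | P (G ω)} :=
  hG (.of_discrete (s := {x | P x}))

section RandomFinset

variable {Ω ι : Type*} {I : Ω → Finset ι}

lemma finset_sum_eq_tsum_indicator (f : ι → Ω → ℝ≥0∞) (ω : Ω) :
    ∑ i ∈ I ω, f i ω = ∑' i, {ω | i ∈ I ω}.indicator (f i) ω := by
  rw [tsum_eq_sum (s := I ω) fun i hi => Set.indicator_of_notMem (s := {ω | i ∈ I ω}) hi (f i)]
  exact sum_congr rfl fun i hi => (Set.indicator_of_mem (s := {ω | i ∈ I ω}) hi (f i)).symm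

variable [MeasurableSpace Ω] {μ : Measure Ω} [Countable ι]

lemma measurable_finset_sum_of_measurableSet_mem (hI : ∀ i, MeasurableSet {ω | i ∈ I ω})
    {f : ι → Ω → ℝ≥0∞} (hf : ∀ i, Measurable (f i)) :
    Measurable fun ω => ∑ i ∈ I ω, f i ω := by
  simp_rw [finset_sum_eq_tsum_indicator]
  exact Measurable.tsum fun i => (hf i).indicator (hI i)

lemma lintegral_finset_sum_of_measurableSet_mem (hI : ∀ i, MeasurableSet {ω | i ∈ I ω})
    {f : ι → Ω → ℝ≥0∞} (hf : ∀ i, Measurable (f i)) :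
    ∫⁻ ω, ∑ i ∈ I ω, f i ω ∂μ = ∑' i, ∫⁻ ω in {ω | i ∈ I ω}, f i ω ∂μ := by
  simp_rw [finset_sum_eq_tsum_indicator]
  rw [lintegral_tsum fun i => ((hf i).indicator (hI i)).aemeasurable]
  simp_rw [lintegral_indicator (hI _)]

lemma lintegral_card_eq_tsum_measure_mem (hI : ∀ i, MeasurableSet {ω | i ∈ I ω}) :
    ∫⁻ ω, (#(I ω) : ℝ≥0∞) ∂μ = ∑' i, μ {ω | i ∈ I ω} := by
  simpa using lintegral_finset_sum_of_measurableSet_mem (μ := μ) hI (f := fun _ _ => 1)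
    fun _ => measurable_const

lemma lintegral_finset_sum_indicator_le (hI : ∀ i, MeasurableSet {ω | i ∈ I ω})
    {E : ι → Set Ω} (hE : ∀ i, MeasurableSet (E i)) {c : ℝ≥0∞}
    (h : ∀ i, μ (E i ∩ {ω | i ∈ I ω}) ≤ c * μ {ω | i ∈ I ω}) :
    ∫⁻ ω, ∑ i ∈ I ω, (E i).indicator 1 ω ∂μ ≤ c * ∑' i, μ {ω | i ∈ I ω} := by
  rw [lintegral_finset_sum_of_measurableSet_mem hI fun i => measurable_one.indicator (hE i),
    ← ENNReal.tsum_mul_left]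
  refine ENNReal.tsum_le_tsum fun i => ?_
  rw [lintegral_indicator_one (hE i), Measure.restrict_apply (hE i)]
  exact h i

end RandomFinset

section NatValued

variable {Ω : Type*} [MeasurableSpace Ω] {μ : Measure Ω} {Z Z' : Ω → ℕ}

lemma lintegral_natCast_eq_tsum (hZ : Measurable Z) :
    ∫⁻ ω, (Z ω : ℝ≥0∞) ∂μ = ∑' i, μ {ω | i ∈ Icc 1 (Z ω)} := by
  rw [← lintegral_card_eq_tsum_measure_mem fun i =>
    hZ.measurableSet_setOf_of_discrete fun n => i ∈ Icc 1 n]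
  simp

lemma lintegral_natCast_mul_eq_tsum (hZ : Measurable Z) (hZ' : Measurable Z') :
    ∫⁻ ω, (Z ω * Z' ω : ℝ≥0∞) ∂μ = ∑' q, μ {ω | q ∈ Icc 1 (Z ω) ×ˢ Icc 1 (Z' ω)} := by
  rw [← lintegral_card_eq_tsum_measure_mem fun q =>
    (hZ.prodMk hZ').measurableSet_setOf_of_discrete fun x => q ∈ Icc 1 x.1 ×ˢ Icc 1 x.2]
  simp

lemma lintegral_mul_lintegral_le_of_quadrant_dependent (hZ : Measurable Z)
    (hZ' : Measurable Z')
    (hpqd : ∀ i j : ℕ, 1 ≤ i → 1 ≤ j →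
      μ {ω | i ≤ Z ω} * μ {ω | j ≤ Z' ω} ≤ μ {ω | i ≤ Z ω ∧ j ≤ Z' ω}) :
    (∫⁻ ω, (Z ω : ℝ≥0∞) ∂μ) * ∫⁻ ω, (Z' ω : ℝ≥0∞) ∂μ ≤ ∫⁻ ω, (Z ω * Z' ω : ℝ≥0∞) ∂μ := by
  rw [lintegral_natCast_eq_tsum hZ, lintegral_natCast_eq_tsum hZ',
    lintegral_natCast_mul_eq_tsum hZ hZ', ← ENNReal.tsum_mul_right, ENNReal.tsum_prod']
  refine ENNReal.tsum_le_tsum fun i => ?_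
  rw [← ENNReal.tsum_mul_left]
  refine ENNReal.tsum_le_tsum fun j => ?_
  rcases Nat.eq_zero_or_pos i with rfl | hi
  · simp
  rcases Nat.eq_zero_or_pos j with rfl | hj
  · simp
  simpa [Nat.one_le_of_lt hi, Nat.one_le_of_lt hj] using hpqd i j hi hj

end NatValued

section RandomCount

variable {Ω : Type*}

noncomputable def randomCount (N : Ω → ℕ) (E : ℕ → Set Ω) (ω : Ω) : ℝ≥0∞ :=
  ∑ i ∈ Icc 1 (N ω), (E i).indicator 1 ω

lemma randomCount_ne_top (N : Ω → ℕ) (E : ℕ → Set Ω) (ω : Ω) : randomCount N E ω ≠ ∞ :=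
  ENNReal.sum_ne_top.2 fun _ _ =>
    ne_top_of_le_ne_top ENNReal.one_ne_top (indicator_one_apply_le_one _ ω)

lemma randomCount_mul_randomCount (N N' : Ω → ℕ) (E F : ℕ → Set Ω) (ω : Ω) :
    randomCount N E ω * randomCount N' F ω
      = ∑ q ∈ Icc 1 (N ω) ×ˢ Icc 1 (N' ω), (E q.1 ∩ F q.2).indicator 1 ω := by
  simp [randomCount, sum_mul_sum, sum_product, Set.inter_indicator_one]

lemma sum_indicator_comp_eq_toReal_randomCount (N : Ω → ℕ) (T : ℕ → Ω → ℝ) (A : Set ℝ)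
    (ω : Ω) :
    ∑ i ∈ Icc 1 (N ω), A.indicator (fun _ => (1 : ℝ)) (T i ω)
      = (randomCount N (fun i => T i ⁻¹' A) ω).toReal := by
  rw [randomCount, ENNReal.toReal_sum fun i _ =>
    ne_top_of_le_ne_top ENNReal.one_ne_top (indicator_one_apply_le_one _ ω)]
  refine sum_congr rfl fun i _ => ?_
  by_cases h : T i ω ∈ A <;> simp [h]

variable [MeasurableSpace Ω] {μ : Measure Ω} {N : Ω → ℕ}

lemma measurable_randomCount (hN : Measurable N) {E : ℕ → Set Ω}
    (hE : ∀ i, MeasurableSet (E i)) : Measurable (randomCount N E) :=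
  measurable_finset_sum_of_measurableSet_mem
    (fun i => hN.measurableSet_setOf_of_discrete fun n => i ∈ Icc 1 n)
    fun i => measurable_one.indicator (hE i)

lemma lintegral_randomCount_le (E : ℕ → Set Ω) :
    ∫⁻ ω, randomCount N E ω ∂μ ≤ ∫⁻ ω, (N ω : ℝ≥0∞) ∂μ := by
  refine lintegral_mono fun ω => (sum_le_card_nsmul _ _ 1 fun i _ => ?_).trans (by simp)
  exact indicator_one_apply_le_one _ ω

end RandomCount

section Independence

variable {Ω : Type*} [MeasurableSpace Ω] {μ : Measure Ω} {Z Z' : Ω → ℕ} {T S : ℕ → Ω → ℝ}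
  {A B : Set ℝ} {c : ℝ≥0∞}

lemma lintegral_randomCount_le_of_indepFun (hZ' : Measurable Z') (hS : ∀ j, Measurable (S j))
    (hindep : IndepFun (fun ω => (fun q : ℕ × ℕ => (T q.1 ω, S q.2 ω)))
      (fun ω => (Z ω, Z' ω)) μ)
    (hB : MeasurableSet B) (hSB : ∀ j : ℕ, 1 ≤ j → μ (S j ⁻¹' B) ≤ c) :
    ∫⁻ ω, randomCount Z' (fun j => S j ⁻¹' B) ω ∂μ ≤ c * ∫⁻ ω, (Z' ω : ℝ≥0∞) ∂μ := by
  rw [lintegral_natCast_eq_tsum hZ']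
  refine lintegral_finset_sum_indicator_le
    (fun j => hZ'.measurableSet_setOf_of_discrete fun n => j ∈ Icc 1 n) (fun j => hS j hB)
    fun j => ?_
  rcases Nat.eq_zero_or_pos j with rfl | hj
  · simp
  calc μ (S j ⁻¹' B ∩ {ω | j ∈ Icc 1 (Z' ω)})
      = μ (S j ⁻¹' B) * μ {ω | j ∈ Icc 1 (Z' ω)} :=
        hindep.measure_inter_preimage_eq_mul {f | (f (0, j)).2 ∈ B} {x | j ∈ Icc 1 x.2}
          (measurable_snd.comp (measurable_pi_apply (0, j)) hB) .of_discrete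
    _ ≤ c * μ {ω | j ∈ Icc 1 (Z' ω)} := by gcongr; exact hSB j hj

lemma lintegral_randomCount_mul_randomCount_le_of_indepFun (hZ : Measurable Z)
    (hZ' : Measurable Z') (hT : ∀ i, Measurable (T i)) (hS : ∀ j, Measurable (S j))
    (hindep : IndepFun (fun ω => (fun q : ℕ × ℕ => (T q.1 ω, S q.2 ω)))
      (fun ω => (Z ω, Z' ω)) μ)
    (hA : MeasurableSet A) (hB : MeasurableSet B) (hSB : ∀ j : ℕ, 1 ≤ j → μ (S j ⁻¹' B) ≤ c) :
    ∫⁻ ω, randomCount Z (fun i => T i ⁻¹' A) ω * randomCount Z' (fun j => S j ⁻¹' B) ω ∂μ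
      ≤ c * ∫⁻ ω, (Z ω * Z' ω : ℝ≥0∞) ∂μ := by
  simp_rw [randomCount_mul_randomCount, lintegral_natCast_mul_eq_tsum hZ hZ']
  refine lintegral_finset_sum_indicator_le
    (fun q => (hZ.prodMk hZ').measurableSet_setOf_of_discrete
      fun x => q ∈ Icc 1 x.1 ×ˢ Icc 1 x.2)
    (fun q => (hT q.1 hA).inter (hS q.2 hB)) fun ⟨i, j⟩ => ?_
  rcases Nat.eq_zero_or_pos j with rfl | hj
  · simp
  calc μ ((T i ⁻¹' A ∩ S j ⁻¹' B) ∩ {ω | (i, j) ∈ Icc 1 (Z ω) ×ˢ Icc 1 (Z' ω)})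
      = μ (T i ⁻¹' A ∩ S j ⁻¹' B) * μ {ω | (i, j) ∈ Icc 1 (Z ω) ×ˢ Icc 1 (Z' ω)} :=
        hindep.measure_inter_preimage_eq_mul {f | f (i, j) ∈ A ×ˢ B}
          {x | (i, j) ∈ Icc 1 x.1 ×ˢ Icc 1 x.2} (measurable_pi_apply (i, j) (hA.prod hB))
          .of_discrete
    _ ≤ c * μ {ω | (i, j) ∈ Icc 1 (Z ω) ×ˢ Icc 1 (Z' ω)} := by
        gcongr; exact (measure_mono Set.inter_subset_right).trans (hSB j hj)

end Independence

lemma abs_toReal_sub_toReal_mul_le {xy x y zz z z' c : ℝ≥0∞} (hzz : zz ≠ ∞) (hc : c ≠ ∞)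
    (hxy : xy ≤ c * zz) (hx_y : x * y ≤ c * zz) (hz_z' : z * z' ≤ zz) :
    |xy.toReal - x.toReal * y.toReal|
      ≤ c.toReal * (zz.toReal + (zz.toReal - z.toReal * z'.toReal)) := by
  have hczz : c * zz ≠ ∞ := ENNReal.mul_ne_top hc hzz
  have hxy' : xy.toReal ≤ c.toReal * zz.toReal := by
    rw [← ENNReal.toReal_mul]; exact ENNReal.toReal_mono hczz hxy
  have hx_y' : x.toReal * y.toReal ≤ c.toReal * zz.toReal := by
    rw [← ENNReal.toReal_mul, ← ENNReal.toReal_mul]; exact ENNReal.toReal_mono hczz hx_y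
  have hz_z'' : z.toReal * z'.toReal ≤ zz.toReal := by
    rw [← ENNReal.toReal_mul]; exact ENNReal.toReal_mono hzz hz_z'
  calc |xy.toReal - x.toReal * y.toReal| ≤ c.toReal * zz.toReal :=
        abs_sub_le_of_nonneg_of_le ENNReal.toReal_nonneg hxy' (by positivity) hx_y'
    _ ≤ c.toReal * (zz.toReal + (zz.toReal - z.toReal * z'.toReal)) := by
        gcongr; linarith

theorem cov_random_sums_bound_general {Ω : Type*} [MeasurableSpace Ω]
    (P : Measure Ω)
    (Z Z' : Ω → ℕ) (hZ : Measurable Z) (hZ' : Measurable Z')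
    (hint : Integrable (fun ω => (Z ω : ℝ) * (Z' ω : ℝ)) P)
    (hpqd : ∀ i j : ℕ, 1 ≤ i → 1 ≤ j →
      P {ω | i ≤ Z ω} * P {ω | j ≤ Z' ω} ≤ P {ω | i ≤ Z ω ∧ j ≤ Z' ω})
    (T S : ℕ → Ω → ℝ)
    (hT : ∀ i, Measurable (T i)) (hS : ∀ j, Measurable (S j))
    (hindep : IndepFun (fun ω => (fun q : ℕ × ℕ => (T q.1 ω, S q.2 ω)))
      (fun ω => (Z ω, Z' ω)) P)
    (A B : Set ℝ) (hA : MeasurableSet A) (hB : MeasurableSet B)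
    (p : ℝ) (hp : 0 ≤ p)
    (hSB : ∀ j : ℕ, 1 ≤ j → P {ω | S j ω ∈ B} ≤ ENNReal.ofReal p) :
    |(∫ ω, (∑ i ∈ Finset.Icc 1 (Z ω), A.indicator (fun _ => (1 : ℝ)) (T i ω))
          * (∑ j ∈ Finset.Icc 1 (Z' ω), B.indicator (fun _ => (1 : ℝ)) (S j ω)) ∂P)
        - (∫ ω, ∑ i ∈ Finset.Icc 1 (Z ω), A.indicator (fun _ => (1 : ℝ)) (T i ω) ∂P)
          * (∫ ω, ∑ j ∈ Finset.Icc 1 (Z' ω), B.indicator (fun _ => (1 : ℝ)) (S j ω) ∂P)|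
      ≤ p * ((∫ ω, (Z ω : ℝ) * (Z' ω : ℝ) ∂P)
          + ((∫ ω, (Z ω : ℝ) * (Z' ω : ℝ) ∂P)
            - (∫ ω, (Z ω : ℝ) ∂P) * (∫ ω, (Z' ω : ℝ) ∂P))) := by
  set X := randomCount Z fun i => T i ⁻¹' A
  set Y := randomCount Z' fun j => S j ⁻¹' B
  have hreal (f : Ω → ℝ≥0∞) (hf : Measurable f) (hfin : ∀ ω, f ω ≠ ∞) :
      ∫ ω, (f ω).toReal ∂P = (∫⁻ ω, f ω ∂P).toReal :=
    integral_toReal hf.aemeasurable (ae_of_all _ fun ω => (hfin ω).lt_top)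
  have hX := measurable_randomCount hZ fun i => hT i hA
  have hY := measurable_randomCount hZ' fun j => hS j hB
  have hZm : Measurable fun ω => (Z ω : ℝ≥0∞) := Measurable.of_discrete.comp hZ
  have hZ'm : Measurable fun ω => (Z' ω : ℝ≥0∞) := Measurable.of_discrete.comp hZ'
  simp_rw [sum_indicator_comp_eq_toReal_randomCount, ← ENNReal.toReal_natCast,
    ← ENNReal.toReal_mul]
  rw [hreal (fun ω => X ω * Y ω) (hX.mul hY)
      fun ω => ENNReal.mul_ne_top (randomCount_ne_top _ _ ω) (randomCount_ne_top _ _ ω),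
    hreal X hX (randomCount_ne_top _ _), hreal Y hY (randomCount_ne_top _ _),
    hreal (fun ω => (Z ω : ℝ≥0∞) * Z' ω) (hZm.mul hZ'm) (by simp [ENNReal.mul_eq_top]),
    hreal _ hZm (by simp), hreal _ hZ'm (by simp), ← ENNReal.toReal_ofReal hp]
  have hZZ'_fin : ∫⁻ ω, (Z ω * Z' ω : ℝ≥0∞) ∂P ≠ ∞ := by
    simpa [ENNReal.ofReal_mul] using hint.lintegral_lt_top.ne
  have hEZ_EZ' := lintegral_mul_lintegral_le_of_quadrant_dependent hZ hZ' hpqd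
  refine abs_toReal_sub_toReal_mul_le hZZ'_fin ENNReal.ofReal_ne_top
    (lintegral_randomCount_mul_randomCount_le_of_indepFun hZ hZ' hT hS hindep hA hB hSB)
    ?_ hEZ_EZ'
  calc _ ≤ (∫⁻ ω, (Z ω : ℝ≥0∞) ∂P) * (ENNReal.ofReal p * ∫⁻ ω, (Z' ω : ℝ≥0∞) ∂P) :=
        mul_le_mul' (lintegral_randomCount_le _)
          (lintegral_randomCount_le_of_indepFun hZ' hS hindep hB hSB)
    _ ≤ ENNReal.ofReal p * ∫⁻ ω, (Z ω * Z' ω : ℝ≥0∞) ∂P := by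
        rw [mul_left_comm]; gcongr

/-- For `ℕ`-valued `Z, Z'` with `E[ZZ'] < ∞` which are positively quadrant dependent, and
points `(T_i)`, `(S_j)` independent (as a family) of `(Z, Z')`, if `ℙ(S_j ∈ B) ≤ p` for all
`j ≥ 1`, then `|Cov(Σ_{i=1}^{Z} 1_{T_i ∈ A}, Σ_{j=1}^{Z'} 1_{S_j ∈ B})|
≤ p (E[ZZ'] + Cov(Z, Z'))`. -/
theorem cov_random_sums_bound {Ω : Type*} [MeasurableSpace Ω]
    (P : Measure Ω) [IsProbabilityMeasure P]
    (Z Z' : Ω → ℕ) (hZ : Measurable Z) (hZ' : Measurable Z')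
    (hint : Integrable (fun ω => (Z ω : ℝ) * (Z' ω : ℝ)) P)
    (hpqd : ∀ i j : ℕ, 1 ≤ i → 1 ≤ j →
      P {ω | i ≤ Z ω} * P {ω | j ≤ Z' ω} ≤ P {ω | i ≤ Z ω ∧ j ≤ Z' ω})
    (T S : ℕ → Ω → ℝ)
    (hT : ∀ i, Measurable (T i)) (hS : ∀ j, Measurable (S j))
    (hindep : IndepFun (fun ω => (fun q : ℕ × ℕ => (T q.1 ω, S q.2 ω)))
      (fun ω => (Z ω, Z' ω)) P)
    (A B : Set ℝ) (hA : MeasurableSet A) (hB : MeasurableSet B)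
    (p : ℝ) (hp : 0 ≤ p)
    (hSB : ∀ j : ℕ, 1 ≤ j → P {ω | S j ω ∈ B} ≤ ENNReal.ofReal p) :
    |(∫ ω, (∑ i ∈ Finset.Icc 1 (Z ω), A.indicator (fun _ => (1 : ℝ)) (T i ω))
          * (∑ j ∈ Finset.Icc 1 (Z' ω), B.indicator (fun _ => (1 : ℝ)) (S j ω)) ∂P)
        - (∫ ω, ∑ i ∈ Finset.Icc 1 (Z ω), A.indicator (fun _ => (1 : ℝ)) (T i ω) ∂P)
          * (∫ ω, ∑ j ∈ Finset.Icc 1 (Z' ω), B.indicator (fun _ => (1 : ℝ)) (S j ω) ∂P)|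
      ≤ p * ((∫ ω, (Z ω : ℝ) * (Z' ω : ℝ) ∂P)
          + ((∫ ω, (Z ω : ℝ) * (Z' ω : ℝ) ∂P)
            - (∫ ω, (Z ω : ℝ) ∂P) * (∫ ω, (Z' ω : ℝ) ∂P))) :=
  cov_random_sums_bound_general P Z Z' hZ hZ' hint hpqd T S hT hS hindep A B hA hB p hp hSB
end
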